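/- arXiv:1311.2486 — 5 statements merged into one kernel-verified Lean document; each statement's English description precedes it below -/
import Mathlib

section
/- Let ξ = (ξ₀,…,ξₙ) and η = (η₀,…,ηₘ) be finite strings in a type V with ξ₀ = η₀, and suppose for all pairs (i,j) the transition counts agree: N_{i,j}(ξ) = N_{i,j}(η), where N_{i,j}(ξ) = #{k : 0 ≤ k ≤ n−1, ξ_k = i, ξ_{k+1} = j}. Then n = m and the final states agree: ξₙ = ηₘ. -/
/-!
The transition counts are the multiplicities of the multiset `T` of consecutive pairs
`(ξₖ, ξₖ₊₁)`, whose cardinality is the length `n`. Listing the visited states `ξ₀, …, ξₙ` as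
first components of `T` misses only `ξₙ`, and as second components misses only `ξ₀`, so
`ξₙ ::ₘ T.map fst = ξ₀ ::ₘ T.map snd`. Two strings with the same `T` and the same start
therefore end at the same state.
-/

/-- Transition count `N i j` of a finite string `ξ : Fin (n+1) → V`. -/
def transCount {V : Type*} [DecidableEq V] {n : ℕ} (ξ : Fin (n + 1) → V) (i j : V) : ℕ :=
  (Finset.univ.filter (fun k : Fin n => ξ k.castSucc = i ∧ ξ k.succ = j)).card

section Transitions

variable {V : Type*} {n m : ℕ}

def transitions (ξ : Fin (n + 1) → V) : Multiset (V × V) :=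
  Finset.univ.val.map fun k : Fin n => (ξ k.castSucc, ξ k.succ)

theorem card_transitions (ξ : Fin (n + 1) → V) : (transitions ξ).card = n := by
  simp [transitions]

theorem count_transitions [DecidableEq V] (ξ : Fin (n + 1) → V) (i j : V) :
    (transitions ξ).count (i, j) = transCount ξ i j := by
  simp only [transitions, transCount, Multiset.count_map, Finset.card_def, Finset.filter_val,
    Prod.mk.injEq, eq_comm]

theorem transitions_eq_iff [DecidableEq V] (ξ : Fin (n + 1) → V) (η : Fin (m + 1) → V) :
    transitions ξ = transitions η ↔ ∀ i j, transCount ξ i j = transCount η i j := by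
  simp only [Multiset.ext, Prod.forall, count_transitions]

theorem last_cons_map_fst_transitions (ξ : Fin (n + 1) → V) :
    ξ (Fin.last n) ::ₘ (transitions ξ).map Prod.fst = ξ 0 ::ₘ (transitions ξ).map Prod.snd := by
  simp only [transitions, Fin.univ_val_map, Multiset.map_coe, List.map_ofFn, Function.comp_def,
    Multiset.cons_coe, Multiset.coe_eq_coe]
  rw [← List.ofFn_succ, List.ofFn_succ', List.concat_eq_append]
  exact (List.perm_append_singleton _ _).symm

end Transitions

theorem stmt0 {V : Type*} [DecidableEq V] {n m : ℕ}
    (ξ : Fin (n + 1) → V) (η : Fin (m + 1) → V)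
    (hstart : ξ 0 = η 0)
    (hN : ∀ i j : V, transCount ξ i j = transCount η i j) :
    n = m ∧ ξ (Fin.last n) = η (Fin.last m) := by
  have hT := (transitions_eq_iff ξ η).2 hN
  refine ⟨card_transitions ξ ▸ card_transitions η ▸ congrArg Multiset.card hT, ?_⟩
  apply (Multiset.cons_inj_left ((transitions η).map Prod.fst)).1
  calc ξ (Fin.last n) ::ₘ (transitions η).map Prod.fst
      = ξ 0 ::ₘ (transitions ξ).map Prod.snd := by rw [← hT, last_cons_map_fst_transitions]
    _ = η 0 ::ₘ (transitions η).map Prod.snd := by rw [hstart, hT]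
    _ = η (Fin.last m) ::ₘ (transitions η).map Prod.fst := (last_cons_map_fst_transitions η).symm
end

section
/- Let H₁, Hₙ : [0,∞) → (0,∞) be differentiable with continuous derivatives, and let λ₁ₙ, λₙ₁ > 0. Suppose that for all r₁, s₁, r₂ ≥ 0, λ₁ₙ (Hₙ(r₂) − Hₙ(0)) (Ĥ₁(r₁+s₁) − Ĥ₁(r₁)) = λₙ₁ (H₁(r₁+s₁) − H₁(r₁)) (Ĥₙ(r₂) − Ĥₙ(0)), where Ĥᵢ is a primitive of 1/Hᵢ. Then for all r ≥ 0, λ₁ₙ (Hₙ²)'(0) = λₙ₁ (H₁²)'(r); in particular (H₁²)' is constant. -/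
/-!
Differentiating the hypothesis in `s₁` at `s₁ = 0` separates it into
`λ₁ₙ (Hₙ(r₂) - Hₙ(0)) / H₁(r₁) = λₙ₁ H₁'(r₁) (Ĥₙ(r₂) - Ĥₙ(0))`, and differentiating this in
`r₂` at `r₂ = 0` gives `λ₁ₙ Hₙ'(0) / H₁(r₁) = λₙ₁ H₁'(r₁) / Hₙ(0)`. Clearing denominators yields
`λ₁ₙ Hₙ(0) Hₙ'(0) = λₙ₁ H₁(r₁) H₁'(r₁)`, which is the claim since `(H²)' = 2 H H'`.
-/

open Set

theorem mul_eq_mul_of_increments_eq {φ ψ : ℝ → ℝ} {φ' ψ' a b r : ℝ}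
    (hφ : HasDerivWithinAt φ φ' (Ici r) r) (hψ : HasDerivWithinAt ψ ψ' (Ici r) r)
    (h : ∀ t, r ≤ t → a * (φ t - φ r) = b * (ψ t - ψ r)) :
    a * φ' = b * ψ' :=
  (uniqueDiffOn_Ici r r self_mem_Ici).eq_deriv _ ((hφ.sub_const (φ r)).const_mul a)
    (((hψ.sub_const (ψ r)).const_mul b).congr h (h r le_rfl))

theorem stmt4_general (H₁ Hₙ Hhat₁ Hhatₙ : ℝ → ℝ) (lam₁ₙ lamₙ₁ : ℝ)
    (hH₁pos : ∀ x, 0 ≤ x → 0 < H₁ x) (hHₙpos : ∀ x, 0 ≤ x → 0 < Hₙ x)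
    (hH₁diff : ∀ x, 0 ≤ x → HasDerivWithinAt H₁ (deriv H₁ x) (Set.Ici 0) x)
    (hHₙdiff : ∀ x, 0 ≤ x → HasDerivWithinAt Hₙ (deriv Hₙ x) (Set.Ici 0) x)
    (hHhat₁ : ∀ x, 0 ≤ x → HasDerivWithinAt Hhat₁ (1 / H₁ x) (Set.Ici 0) x)
    (hHhatₙ : ∀ x, 0 ≤ x → HasDerivWithinAt Hhatₙ (1 / Hₙ x) (Set.Ici 0) x)
    (hyp : ∀ r₁ s₁ r₂ : ℝ, 0 ≤ r₁ → 0 ≤ s₁ → 0 ≤ r₂ →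
      lam₁ₙ * (Hₙ r₂ - Hₙ 0) * (Hhat₁ (r₁ + s₁) - Hhat₁ r₁)
        = lamₙ₁ * (H₁ (r₁ + s₁) - H₁ r₁) * (Hhatₙ r₂ - Hhatₙ 0)) :
    ∀ r : ℝ, 0 ≤ r →
      lam₁ₙ * derivWithin (fun x => Hₙ x ^ 2) (Set.Ici 0) 0
        = lamₙ₁ * derivWithin (fun x => H₁ x ^ 2) (Set.Ici 0) r := by
  intro r hr
  have separated : ∀ r₂, 0 ≤ r₂ →
      lam₁ₙ * (Hₙ r₂ - Hₙ 0) * (1 / H₁ r) = lamₙ₁ * (Hhatₙ r₂ - Hhatₙ 0) * deriv H₁ r := by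
    intro r₂ hr₂
    refine mul_eq_mul_of_increments_eq ((hHhat₁ r hr).mono (Ici_subset_Ici.2 hr))
      ((hH₁diff r hr).mono (Ici_subset_Ici.2 hr)) fun t ht => ?_
    have := hyp r (t - r) r₂ hr (sub_nonneg.2 ht) hr₂
    rw [add_sub_cancel] at this
    linear_combination this
  have cross : lam₁ₙ * (1 / H₁ r) * deriv Hₙ 0 = lamₙ₁ * deriv H₁ r * (1 / Hₙ 0) :=
    mul_eq_mul_of_increments_eq (hHₙdiff 0 le_rfl) (hHhatₙ 0 le_rfl) fun t ht => by
      linear_combination separated t ht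
  rw [((hHₙdiff 0 le_rfl).fun_pow 2).derivWithin (uniqueDiffOn_Ici 0 0 self_mem_Ici),
    ((hH₁diff r hr).fun_pow 2).derivWithin (uniqueDiffOn_Ici 0 r hr)]
  field_simp [(hH₁pos r hr).ne', (hHₙpos 0 le_rfl).ne'] at cross
  linear_combination 2 * cross

theorem stmt4 (H₁ Hₙ Hhat₁ Hhatₙ : ℝ → ℝ) (lam₁ₙ lamₙ₁ : ℝ)
    (hlam1 : 0 < lam₁ₙ) (hlam2 : 0 < lamₙ₁)
    (hH₁pos : ∀ x, 0 ≤ x → 0 < H₁ x) (hHₙpos : ∀ x, 0 ≤ x → 0 < Hₙ x)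
    (hH₁diff : ∀ x, 0 ≤ x → HasDerivWithinAt H₁ (deriv H₁ x) (Set.Ici 0) x)
    (hHₙdiff : ∀ x, 0 ≤ x → HasDerivWithinAt Hₙ (deriv Hₙ x) (Set.Ici 0) x)
    (hH₁cont : ContinuousOn (deriv H₁) (Set.Ici 0))
    (hHₙcont : ContinuousOn (deriv Hₙ) (Set.Ici 0))
    (hHhat₁ : ∀ x, 0 ≤ x → HasDerivWithinAt Hhat₁ (1 / H₁ x) (Set.Ici 0) x)
    (hHhatₙ : ∀ x, 0 ≤ x → HasDerivWithinAt Hhatₙ (1 / Hₙ x) (Set.Ici 0) x)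
    (hyp : ∀ r₁ s₁ r₂ : ℝ, 0 ≤ r₁ → 0 ≤ s₁ → 0 ≤ r₂ →
      lam₁ₙ * (Hₙ r₂ - Hₙ 0) * (Hhat₁ (r₁ + s₁) - Hhat₁ r₁)
        = lamₙ₁ * (H₁ (r₁ + s₁) - H₁ r₁) * (Hhatₙ r₂ - Hhatₙ 0)) :
    ∀ r : ℝ, 0 ≤ r →
      lam₁ₙ * derivWithin (fun x => Hₙ x ^ 2) (Set.Ici 0) 0
        = lamₙ₁ * derivWithin (fun x => H₁ x ^ 2) (Set.Ici 0) r :=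
  stmt4_general H₁ Hₙ Hhat₁ Hhatₙ lam₁ₙ lamₙ₁ hH₁pos hHₙpos hH₁diff hHₙdiff hHhat₁ hHhatₙ hyp
end

section
/- Let (i₀,…,iₙ) be a finite path and s₁ < s₂ < … < sₙ < s positive reals; define local times S_i(u) = Σ_{k} (min(u, s_{k+1}) − s_k)·1_{i_k = i} (length of time the step path spends at i before time u, where s₀ = 0 and s_{n+1} = s). Then the telescoping product Π_{k=1}^{n} √(S_{i_k}(s_{k−1}) + 1) / √(S_{i_{k−1}}(s_k) + 1) equals Π_{i ≠ iₙ} 1/√(S_i(s) + 1), where the product on the right is over all states i visited by the path with i ≠ iₙ, and uses that S_{i_k}(s_{k−1}) records the local time of i_k at the moment of the k-th jump. -/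
/-!
Write `F k v = √(S_v(s_k) + 1)`. Between the jump times `s_k` and `s_{k+1}` only the local
time of `i_k` grows, so `F (k + 1)` and `F k` agree away from `i_k`, and `F 0 ≡ 1`. Because the
path really jumps, the numerator of the `k`-th factor is `F k (i k)`; by induction on `n`, the
product then collapses to `∏ (F (n + 1) v)⁻¹` over the visited vertices other than `i n`, where
a vertex met for the first time at step `n + 1` contributes `F (n + 1) (i (n + 1)) = 1`.
-/

open Finset

section JumpProduct

variable {V M : Type*} [DecidableEq V] [CommGroupWithZero M]

theorem Finset.prod_erase_inv_eq_mul_prod_inv {s : Finset V} {a : V} (f : V → M)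
    (ha : a ∈ s) (hfa : f a ≠ 0) :
    ∏ x ∈ s.erase a, (f x)⁻¹ = f a * ∏ x ∈ s, (f x)⁻¹ := by
  rw [← mul_prod_erase s _ ha, ← mul_assoc, mul_inv_cancel₀ hfa, one_mul]

variable (i : ℕ → V) (F : ℕ → V → M)

theorem eq_one_of_notMem_image_range {n : ℕ} (h0 : ∀ v, F 0 v = 1)
    (hstep : ∀ k < n, ∀ v, v ≠ i k → F (k + 1) v = F k v) {v : V}
    (hv : v ∉ image i (range n)) : F n v = 1 := by
  induction n with
  | zero => exact h0 v
  | succ n ih =>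
    rw [range_add_one, image_insert, mem_insert, not_or] at hv
    rw [hstep n n.lt_add_one v hv.1, ih (fun k hk ↦ hstep k (by omega)) hv.2]

theorem prod_jump_ratio_eq_prod_erase_inv (n : ℕ) (h0 : ∀ v, F 0 v = 1)
    (hne : ∀ k v, F k v ≠ 0) (hstep : ∀ k ≤ n, ∀ v, v ≠ i k → F (k + 1) v = F k v)
    (hjump : ∀ k < n, i k ≠ i (k + 1)) :
    ∏ k ∈ Icc 1 n, F (k - 1) (i k) / F k (i (k - 1)) =
      ∏ v ∈ (image i (range (n + 1))).erase (i n), (F (n + 1) v)⁻¹ := by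
  induction n with
  | zero => simp
  | succ n ih =>
    set A := image i (range (n + 1))
    have hjump_n : i (n + 1) ≠ i n := (hjump n n.lt_add_one).symm
    have hnum : F n (i (n + 1)) = F (n + 1) (i (n + 1)) := (hstep n (by omega) _ hjump_n).symm
    have hrhs : ∏ v ∈ A.erase (i (n + 1)), (F (n + 1 + 1) v)⁻¹ =
        F (n + 1) (i (n + 1)) * ∏ v ∈ A, (F (n + 1) v)⁻¹ := by
      rw [prod_congr rfl fun v hv ↦ by rw [hstep (n + 1) le_rfl v (ne_of_mem_erase hv)]]
      by_cases hA : i (n + 1) ∈ A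
      · exact prod_erase_inv_eq_mul_prod_inv _ hA (hne _ _)
      · rw [erase_eq_of_notMem hA,
          eq_one_of_notMem_image_range i F h0 (fun k hk ↦ hstep k (by omega)) hA, one_mul]
    rw [prod_Icc_succ_top (by omega), ih (fun k hk ↦ hstep k (by omega))
        (fun k hk ↦ hjump k (by omega)), Nat.add_sub_cancel, hnum, range_add_one, image_insert,
      erase_insert_eq_erase, hrhs,
      prod_erase_inv_eq_mul_prod_inv _ (mem_image_of_mem i (self_mem_range_succ n)) (hne _ _)]
    rw [mul_right_comm, mul_div_cancel₀ _ (hne _ _)]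

end JumpProduct

section LocalTime

variable {V : Type*} [DecidableEq V]

noncomputable def localTime (i : ℕ → V) (s : ℕ → ℝ) (n : ℕ) (v : V) (u : ℝ) : ℝ :=
  ∑ k ∈ range (n + 1), if i k = v then min u (s (k + 1)) - min u (s k) else 0

variable {i : ℕ → V} {s : ℕ → ℝ} {n : ℕ}

theorem min_eq_of_monotoneOn {N a b : ℕ} (hs : MonotoneOn s (Set.Iic N)) (ha : a ≤ N)
    (hb : b ≤ N) : min (s a) (s b) = s (min a b) := by
  rcases le_total a b with hab | hab
  · rw [min_eq_left (hs ha hb hab), min_eq_left hab]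
  · rw [min_eq_right (hs hb ha hab), min_eq_right hab]

theorem localTime_nonneg (hs : MonotoneOn s (Set.Iic (n + 1))) (v : V) (u : ℝ) :
    0 ≤ localTime i s n v u := by
  refine sum_nonneg fun k hk ↦ ?_
  have hk : k + 1 ≤ n + 1 := by simpa using hk
  split_ifs
  · exact sub_nonneg.2 (min_le_min_left u (hs (show k ≤ n + 1 by omega) hk k.le_succ))
  · exact le_rfl

theorem localTime_zero (hs : MonotoneOn s (Set.Iic (n + 1))) (v : V) :
    localTime i s n v (s 0) = 0 := by
  refine sum_eq_zero fun k hk ↦ ?_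
  have hk : k + 1 ≤ n + 1 := by simpa using hk
  rw [min_eq_of_monotoneOn hs (Nat.zero_le _) hk,
    min_eq_of_monotoneOn hs (Nat.zero_le _) (by omega)]
  simp

theorem localTime_succ_of_ne (hs : MonotoneOn s (Set.Iic (n + 1))) {k : ℕ} (hk : k ≤ n)
    {v : V} (hv : v ≠ i k) : localTime i s n v (s (k + 1)) = localTime i s n v (s k) := by
  refine sum_congr rfl fun j hj ↦ ?_
  have hj : j + 1 ≤ n + 1 := by simpa using hj
  split_ifs with hjv
  · have hjk : j ≠ k := by rintro rfl; exact hv hjv.symm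
    simp only [min_eq_of_monotoneOn hs (by omega : k + 1 ≤ n + 1) hj,
      min_eq_of_monotoneOn hs (by omega : k + 1 ≤ n + 1) (by omega : j ≤ n + 1),
      min_eq_of_monotoneOn hs (by omega : k ≤ n + 1) hj,
      min_eq_of_monotoneOn hs (by omega : k ≤ n + 1) (by omega : j ≤ n + 1)]
    rcases lt_or_gt_of_ne hjk with hlt | hgt
    · rw [show min (k + 1) (j + 1) = min k (j + 1) by omega, show min (k + 1) j = min k j by omega]
    · rw [show min (k + 1) (j + 1) = min (k + 1) j by omega,
        show min k (j + 1) = min k j by omega, sub_self, sub_self]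
  · rfl

end LocalTime

theorem stmt8_general {V : Type*} [DecidableEq V] (n : ℕ) (i : ℕ → V) (s : ℕ → ℝ) (T : ℝ)
    (hsT : s (n + 1) = T)
    (hmono : ∀ k, k ≤ n → s k < s (k + 1))
    (hjump : ∀ k, k < n → i k ≠ i (k + 1))
    -- local time of the step path at vertex `v` up to time `u`
    (S : V → ℝ → ℝ)
    (hS : ∀ v u, S v u =
      ∑ k ∈ Finset.range (n + 1),
        if i k = v then min u (s (k + 1)) - min u (s k) else 0) :
    (∏ k ∈ Finset.Icc 1 n,
        Real.sqrt (S (i k) (s (k - 1)) + 1) / Real.sqrt (S (i (k - 1)) (s k) + 1))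
      = ∏ v ∈ (Finset.image i (Finset.range (n + 1))).erase (i n),
          (Real.sqrt (S v T + 1))⁻¹ := by
  obtain rfl : S = localTime i s n := funext₂ hS
  subst hsT
  have hs : MonotoneOn s (Set.Iic (n + 1)) :=
    (strictMonoOn_Iic_of_lt_succ fun k hk ↦ hmono k (Nat.lt_succ_iff.mp hk)).monotoneOn
  refine prod_jump_ratio_eq_prod_erase_inv i (fun k v ↦ √(localTime i s n v (s k) + 1)) n
    (fun v ↦ by simp [localTime_zero hs]) (fun k v ↦ ?_)
    (fun k hk v hv ↦ by rw [localTime_succ_of_ne hs hk hv]) hjump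
  exact (Real.sqrt_pos.2 (by linarith [localTime_nonneg (i := i) hs v (s k)])).ne'

theorem stmt8 {V : Type*} [DecidableEq V] (n : ℕ) (i : ℕ → V) (s : ℕ → ℝ) (T : ℝ)
    (hs0 : s 0 = 0) (hsT : s (n + 1) = T)
    (hmono : ∀ k, k ≤ n → s k < s (k + 1))
    (hjump : ∀ k, k < n → i k ≠ i (k + 1))
    -- local time of the step path at vertex `v` up to time `u`
    (S : V → ℝ → ℝ)
    (hS : ∀ v u, S v u =
      ∑ k ∈ Finset.range (n + 1),
        if i k = v then min u (s (k + 1)) - min u (s k) else 0) :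
    (∏ k ∈ Finset.Icc 1 n,
        Real.sqrt (S (i k) (s (k - 1)) + 1) / Real.sqrt (S (i (k - 1)) (s k) + 1))
      = ∏ v ∈ (Finset.image i (Finset.range (n + 1))).erase (i n),
          (Real.sqrt (S v T + 1))⁻¹ :=
  stmt8_general n i s T hsT hmono hjump S hS
end

section
/- The density of a trajectory of the time-changed VRJP, d_σ = (1/2)ⁿ Π_{k=1}^n W_{i_{k−1},i_k} · Π_{i ≠ iₙ} (S_i(s)+1)^{−1/2} · exp(−Σ_{i∼j} (W_{i,j}/2)(√((S_i(s)+1)(S_j(s)+1)) − 1)), depends only on the transition counts N_{i,j}(σ), the final state iₙ, and the final local times (S_i(s))_{i∈V}. Consequently, if two trajectories σ, τ of the same duration s satisfy N_{i,j}(σ) = N_{i,j}(τ) for all i,j, have the same initial state, and S_i^σ(s) = S_i^τ(s) for all i, then d_σ = d_τ. -/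
/-- Density of a VRJP trajectory with `n` jumps along `ξ` and final local times `S`. -/
noncomputable def vrjpDensity {V : Type*} [Fintype V] [DecidableEq V]
    (Adj : V → V → Prop) [DecidableRel Adj] (W : V → V → ℝ)
    {n : ℕ} (ξ : Fin (n + 1) → V) (S : V → ℝ) : ℝ :=
  (1 / 2) ^ n * (∏ k : Fin n, W (ξ k.castSucc) (ξ k.succ))
    * (∏ v ∈ Finset.univ.erase (ξ (Fin.last n)), (Real.sqrt (S v + 1))⁻¹)
    * Real.exp (-((∑ p : V, ∑ q : V,
        if Adj p q then (W p q / 2) * (Real.sqrt ((S p + 1) * (S q + 1)) - 1) else 0) / 2))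

/-! Apart from the weight product, every factor of the density depends only on the number of
jumps, the final vertex and the local times. The number of jumps is the total of the transition
counts, and the weight product regroups edge by edge as `∏ W i j ^ N i j`. The final vertex is
pinned down by flow conservation: every visit to `v` is left by a jump unless it is the last one
and entered by a jump unless it is the first one, so
`∑ j, N v j + [last = v] = ∑ i, N i v + [first = v]`. -/

open Finset

lemma sum_card_filter_and_eq_card_filter {ι α : Type*} [Fintype ι] [Fintype α] [DecidableEq α]
    (p : ι → Prop) [DecidablePred p] (f : ι → α) :
    ∑ a, #{k | p k ∧ f k = a} = #{k | p k} := by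
  rw [card_eq_sum_card_fiberwise (f := f) (t := univ) fun _ _ => mem_univ _]
  simp only [filter_filter]

section TransitionCounts

variable {V : Type*} [Fintype V] [DecidableEq V] {n : ℕ}

lemma sum_transCount_right (ξ : Fin (n + 1) → V) (i : V) :
    ∑ j, transCount ξ i j = #{k : Fin n | ξ k.castSucc = i} :=
  sum_card_filter_and_eq_card_filter _ _

lemma sum_transCount_left (ξ : Fin (n + 1) → V) (j : V) :
    ∑ i, transCount ξ i j = #{k : Fin n | ξ k.succ = j} := by
  refine (sum_congr rfl fun i _ => ?_).trans
    (sum_card_filter_and_eq_card_filter (fun k : Fin n => ξ k.succ = j) fun k => ξ k.castSucc)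
  rw [transCount, filter_congr fun _ _ => and_comm]

lemma sum_sum_transCount (ξ : Fin (n + 1) → V) : ∑ i, ∑ j, transCount ξ i j = n := by
  simp only [sum_transCount_right]
  simpa using sum_card_filter_and_eq_card_filter (fun _ : Fin n => True) fun k => ξ k.castSucc

lemma prod_weight_eq_prod_pow_transCount {M : Type*} [CommMonoid M] (ξ : Fin (n + 1) → V)
    (W : V → V → M) :
    ∏ k : Fin n, W (ξ k.castSucc) (ξ k.succ) = ∏ i, ∏ j, W i j ^ transCount ξ i j := by
  refine (prod_fiberwise' univ (fun k : Fin n => (ξ k.castSucc, ξ k.succ))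
    fun p => W p.1 p.2).symm.trans ?_
  simp [Fintype.prod_prod_type, transCount, Prod.ext_iff]

lemma sum_transCount_right_add_ite_last (ξ : Fin (n + 1) → V) (v : V) :
    ∑ j, transCount ξ v j + (if ξ (Fin.last n) = v then 1 else 0)
      = ∑ i, transCount ξ i v + (if ξ 0 = v then 1 else 0) := by
  have visits_castSucc := Fin.sum_univ_castSucc fun k => if ξ k = v then 1 else 0
  have visits_succ := Fin.sum_univ_succ fun k => if ξ k = v then 1 else 0
  simp only [sum_transCount_right, sum_transCount_left, card_filter]
  omega

lemma last_eq_of_transCount_eq {m : ℕ} (ξ : Fin (n + 1) → V) (η : Fin (m + 1) → V)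
    (hN : ∀ i j, transCount ξ i j = transCount η i j) (hstart : ξ 0 = η 0) :
    ξ (Fin.last n) = η (Fin.last m) := by
  have hξ := sum_transCount_right_add_ite_last ξ (ξ (Fin.last n))
  have hη := sum_transCount_right_add_ite_last η (ξ (Fin.last n))
  rw [if_pos rfl] at hξ
  simp only [hN, hstart] at hξ
  by_contra hne
  rw [if_neg (Ne.symm hne)] at hη
  omega

end TransitionCounts

theorem stmt10_general {V : Type*} [Fintype V] [DecidableEq V]
    (G : SimpleGraph V) [DecidableRel G.Adj]
    (W : V → V → ℝ)
    {n m : ℕ} (ξ : Fin (n + 1) → V) (η : Fin (m + 1) → V)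
    (Sσ Sτ : V → ℝ)
    (hN : ∀ i j : V, transCount ξ i j = transCount η i j)
    (hstart : ξ 0 = η 0)
    (hS : ∀ v : V, Sσ v = Sτ v) :
    vrjpDensity G.Adj W ξ Sσ = vrjpDensity G.Adj W η Sτ := by
  obtain rfl : Sσ = Sτ := funext hS
  obtain rfl : n = m := by
    rw [← sum_sum_transCount ξ, ← sum_sum_transCount η]
    simp only [hN]
  have hweight : ∏ k : Fin n, W (ξ k.castSucc) (ξ k.succ)
      = ∏ k : Fin n, W (η k.castSucc) (η k.succ) := by
    simp only [prod_weight_eq_prod_pow_transCount, hN]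
  rw [vrjpDensity, vrjpDensity, hweight, last_eq_of_transCount_eq ξ η hN hstart]

theorem stmt10 {V : Type*} [Fintype V] [DecidableEq V]
    (G : SimpleGraph V) [DecidableRel G.Adj]
    (W : V → V → ℝ)
    (hWpos : ∀ i j, G.Adj i j → 0 < W i j)
    (hWsymm : ∀ i j, W i j = W j i)
    {n m : ℕ} (ξ : Fin (n + 1) → V) (η : Fin (m + 1) → V)
    (Sσ Sτ : V → ℝ)
    (hN : ∀ i j : V, transCount ξ i j = transCount η i j)
    (hstart : ξ 0 = η 0)
    (hS : ∀ v : V, Sσ v = Sτ v) :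
    vrjpDensity G.Adj W ξ Sσ = vrjpDensity G.Adj W η Sτ :=
  stmt10_general G W ξ η Sσ Sτ hN hstart hS
end

section
/- Let (f_{i,j}) be continuous positive jump-rate functions on a strongly connected graph G and suppose there exist C¹ diffeomorphisms h_i of [0,∞) with h_i(0)=0 such that: (a) for each adjacent pair i ∼ j there is λ_{i,j} > 0 with f_{i,j}(x) = λ_{i,j} h_j'(x) for all x ≥ 0, and (b) for H_i = h_i' ∘ h_i^{-1}, each (H_i²)' is constant equal to A_i > 0, with λ_{i,j} A_j = λ_{j,i} A_i for i ∼ j. Then, setting B_i = H_i(0)² and W_{i,j} = λ_{i,j} A_j / 2, there exist constants D_j > 0 such that f_{i,j}(x) = W_{i,j} x + D_{i,j} with D_{i,j} = λ_{i,j}√B_j, i.e. each jump rate is an affine increasing function of the target's local time, and W_{i,j} = W_{j,i}. -/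
/-!
Composing `(H_j²)' = A_j` with `s = h_j(x)` gives `h_j'(x)² = h_j'(0)² + A_j h_j(x)`.
Differentiating the square root of the right-hand side, the factor `h_j'(x)` cancels and
`h_j'' = A_j / 2`, so `h_j'` and hence `f_{i,j} = λ_{i,j} h_j'` are affine; the symmetry of
`W` is the reversibility condition `λ_{i,j} A_j = λ_{j,i} A_i`.
-/

open Set

theorem eq_add_mul_sub_of_hasDerivWithinAt_Ici {F : ℝ → ℝ} {a c : ℝ}
    (hF : ∀ x, a ≤ x → HasDerivWithinAt F c (Ici a) x) {s : ℝ} (hs : a ≤ s) :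
    F s = F a + c * (s - a) := by
  have hline : ∀ x, HasDerivWithinAt (fun u => F a + c * (u - a)) c (Ici x) x := fun x =>
    ((((hasDerivAt_id x).sub_const a).const_mul c).const_add (F a)).hasDerivWithinAt.congr_deriv
      (mul_one c)
  refine eq_of_has_deriv_right_eq (f' := fun _ => c)
    (fun x hx => (hF x hx.1).mono (Ici_subset_Ici.2 hx.1)) (fun x _ => hline x)
    (fun x hx => (hF x hx.1).continuousWithinAt.mono fun y hy => hy.1)
    (by fun_prop) (by simp) s ⟨hs, le_rfl⟩

theorem eq_add_mul_of_sq_eq_add_mul {h φ : ℝ → ℝ} {A : ℝ}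
    (hφpos : ∀ x, 0 ≤ x → 0 < φ x)
    (hderiv : ∀ x, 0 ≤ x → HasDerivWithinAt h (φ x) (Ici 0) x)
    (hsq : ∀ x, 0 ≤ x → φ x ^ 2 = φ 0 ^ 2 + A * h x) {x : ℝ} (hx : 0 ≤ x) :
    φ x = A / 2 * x + φ 0 := by
  have hφ_eq_sqrt : ∀ x, 0 ≤ x → φ x = √(φ 0 ^ 2 + A * h x) := fun x hx => by
    rw [← hsq x hx, Real.sqrt_sq (hφpos x hx).le]
  have hsqrt_deriv : ∀ x, 0 ≤ x →
      HasDerivWithinAt (fun u => √(φ 0 ^ 2 + A * h u)) (A / 2) (Ici 0) x := by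
    intro x hx
    have hne : φ 0 ^ 2 + A * h x ≠ 0 := by rw [← hsq x hx]; exact (pow_pos (hφpos x hx) 2).ne'
    convert (((hderiv x hx).const_mul A).const_add (φ 0 ^ 2)).sqrt hne using 1
    rw [← hφ_eq_sqrt x hx]
    field_simp [(hφpos x hx).ne']
  have := eq_add_mul_sub_of_hasDerivWithinAt_Ici hsqrt_deriv hx
  rw [← hφ_eq_sqrt x hx, ← hφ_eq_sqrt 0 le_rfl, sub_zero] at this
  linarith

theorem stmt15_general {V : Type*} (G : SimpleGraph V)
    (f : V → V → ℝ → ℝ)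
    -- the C¹ diffeomorphisms `h i` of `[0,∞)` with inverses `hinv i`
    (h hinv : V → ℝ → ℝ)
    (hh0 : ∀ i, h i 0 = 0)
    (hhbij : ∀ i, Set.BijOn (h i) (Set.Ici 0) (Set.Ici 0))
    (hhdiff : ∀ i x, 0 ≤ x → HasDerivWithinAt (h i) (deriv (h i) x) (Set.Ici 0) x)
    (hhderivpos : ∀ i x, 0 ≤ x → 0 < deriv (h i) x)
    (hinv_left : ∀ i x, 0 ≤ x → hinv i (h i x) = x)
    -- (a)  f_{i,j} = λ_{i,j} h_j'
    (lam : V → V → ℝ)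
    (hlampos : ∀ i j, G.Adj i j → 0 < lam i j)
    (ha : ∀ i j, G.Adj i j → ∀ x, 0 ≤ x → f i j x = lam i j * deriv (h j) x)
    -- (b)  (H_i²)' ≡ A_i > 0 for H_i = h_i' ∘ h_i⁻¹, with λ_{i,j} A_j = λ_{j,i} A_i
    (A : V → ℝ)
    (hb : ∀ i s, 0 ≤ s →
      HasDerivWithinAt (fun u => (deriv (h i) (hinv i u)) ^ 2) (A i) (Set.Ici 0) s)
    (hrev : ∀ i j, G.Adj i j → lam i j * A j = lam j i * A i) :
    ∀ i j, G.Adj i j →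
      (0 < lam i j * Real.sqrt ((deriv (h j) (hinv j 0)) ^ 2)) ∧
      (∀ x, 0 ≤ x →
        f i j x = (lam i j * A j / 2) * x
          + lam i j * Real.sqrt ((deriv (h j) (hinv j 0)) ^ 2)) ∧
      lam i j * A j / 2 = lam j i * A i / 2 := by
  intro i j hij
  have hinv0 : hinv j 0 = 0 := by simpa [hh0 j] using hinv_left j 0 le_rfl
  have hD : Real.sqrt ((deriv (h j) (hinv j 0)) ^ 2) = deriv (h j) 0 := by
    rw [hinv0, Real.sqrt_sq (hhderivpos j 0 le_rfl).le]
  have hsq : ∀ x, 0 ≤ x → deriv (h j) x ^ 2 = deriv (h j) 0 ^ 2 + A j * h j x := fun x hx => by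
    simpa [hinv_left j x hx, hinv0] using
      eq_add_mul_sub_of_hasDerivWithinAt_Ici (hb j) ((hhbij j).mapsTo (mem_Ici.2 hx))
  refine ⟨?_, fun x hx => ?_, by rw [hrev i j hij]⟩
  · rw [hD]
    exact mul_pos (hlampos i j hij) (hhderivpos j 0 le_rfl)
  · rw [ha i j hij x hx, eq_add_mul_of_sq_eq_add_mul (hhderivpos j) (hhdiff j) hsq hx, hD]
    ring

theorem stmt15 {V : Type*} (G : SimpleGraph V)
    -- strongly connected: every edge lies in a cycle
    (hstrong : ∀ i j, G.Adj i j → ∃ w : G.Walk i i, w.IsCycle ∧ s(i, j) ∈ w.edges)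
    (f : V → V → ℝ → ℝ)
    (hfcont : ∀ i j, G.Adj i j → ContinuousOn (f i j) (Set.Ici 0))
    (hfpos : ∀ i j, G.Adj i j → ∀ x, 0 ≤ x → 0 < f i j x)
    -- the C¹ diffeomorphisms `h i` of `[0,∞)` with inverses `hinv i`
    (h hinv : V → ℝ → ℝ)
    (hh0 : ∀ i, h i 0 = 0)
    (hhmono : ∀ i, StrictMonoOn (h i) (Set.Ici 0))
    (hhbij : ∀ i, Set.BijOn (h i) (Set.Ici 0) (Set.Ici 0))
    (hhdiff : ∀ i x, 0 ≤ x → HasDerivWithinAt (h i) (deriv (h i) x) (Set.Ici 0) x)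
    (hhderivcont : ∀ i, ContinuousOn (deriv (h i)) (Set.Ici 0))
    (hhderivpos : ∀ i x, 0 ≤ x → 0 < deriv (h i) x)
    (hinv_left : ∀ i x, 0 ≤ x → hinv i (h i x) = x)
    (hinv_right : ∀ i s, 0 ≤ s → h i (hinv i s) = s)
    -- (a)  f_{i,j} = λ_{i,j} h_j'
    (lam : V → V → ℝ)
    (hlampos : ∀ i j, G.Adj i j → 0 < lam i j)
    (ha : ∀ i j, G.Adj i j → ∀ x, 0 ≤ x → f i j x = lam i j * deriv (h j) x)
    -- (b)  (H_i²)' ≡ A_i > 0 for H_i = h_i' ∘ h_i⁻¹, with λ_{i,j} A_j = λ_{j,i} A_i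
    (A : V → ℝ)
    (hApos : ∀ i, 0 < A i)
    (hb : ∀ i s, 0 ≤ s →
      HasDerivWithinAt (fun u => (deriv (h i) (hinv i u)) ^ 2) (A i) (Set.Ici 0) s)
    (hrev : ∀ i j, G.Adj i j → lam i j * A j = lam j i * A i) :
    ∀ i j, G.Adj i j →
      (0 < lam i j * Real.sqrt ((deriv (h j) (hinv j 0)) ^ 2)) ∧
      (∀ x, 0 ≤ x →
        f i j x = (lam i j * A j / 2) * x
          + lam i j * Real.sqrt ((deriv (h j) (hinv j 0)) ^ 2)) ∧
      lam i j * A j / 2 = lam j i * A i / 2 :=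
  stmt15_general G f h hinv hh0 hhbij hhdiff hhderivpos hinv_left lam hlampos ha A hb hrev
end
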